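/- arXiv:2507.10458 — 5 statements merged into one kernel-verified Lean document; each statement's English description precedes it below -/
import Mathlib

section
/- For any finite group G and any subgroup H of G, Ω(ρ(H)) ≤ Ω(ρ(G)), with equality if and only if H = G, where ρ(G) = ∏_{x∈G} o(x) and Ω is the prime omega function counting prime factors with multiplicity. -/
open ArithmeticFunction Finset
open scoped ArithmeticFunction.Omega

noncomputable def rho (G : Type*) [Group G] : ℕ := ∏ᶠ x : G, orderOf x

noncomputable def OmegaRho (G : Type*) [Group G] : ℕ :=
  ArithmeticFunction.cardFactors (rho G)

lemma cardFactors_prod' {ι : Type*} (s : Finset ι) (f : ι → ℕ)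
    (hf : ∀ i ∈ s, f i ≠ 0) :
    Ω (∏ i ∈ s, f i) = ∑ i ∈ s, Ω (f i) := by
  classical
  induction s using Finset.induction_on with
  | empty => simp
  | @insert a s hi ih =>
    rw [Finset.prod_insert hi, Finset.sum_insert hi,
      cardFactors_mul (hf a (mem_insert_self a s))
        (Finset.prod_ne_zero_iff.2 fun i h => hf i (mem_insert_of_mem h)),
      ih fun i h => hf i (mem_insert_of_mem h)]

lemma one_le_cardFactors {n : ℕ} (h : 2 ≤ n) : 1 ≤ Ω n := by
  rw [cardFactors_apply]
  refine List.length_pos_iff.2 fun hnil => ?_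
  have := (Nat.primeFactorsList_eq_nil n).1 hnil
  omega

lemma omegaRho_eq (G : Type*) [Group G] [Fintype G] :
    OmegaRho G = ∑ x : G, Ω (orderOf x) := by
  unfold OmegaRho rho
  rw [finprod_eq_prod_of_fintype, cardFactors_prod']
  exact fun i _ => (orderOf_pos i).ne'

theorem omegaRho_subgroup_le (G : Type*) [Group G] [Finite G] (H : Subgroup G) :
    OmegaRho H ≤ OmegaRho G ∧ (OmegaRho H = OmegaRho G ↔ H = ⊤) := by
  classical
  have : Fintype G := Fintype.ofFinite G
  have hH : OmegaRho H = ∑ x ∈ (H : Set G).toFinset, Ω (orderOf x) := by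
    rw [omegaRho_eq]
    calc (∑ x : H, Ω (orderOf x)) = ∑ x : H, Ω (orderOf (x : G)) :=
          Finset.sum_congr rfl fun x _ => by rw [Subgroup.orderOf_coe]
      _ = ∑ x ∈ (H : Set G).toFinset, Ω (orderOf x) :=
          (Finset.sum_subtype ((H : Set G).toFinset) (fun x => by simp)
            (fun x => Ω (orderOf x))).symm
  have hG : OmegaRho G = ∑ x : G, Ω (orderOf x) := omegaRho_eq G
  have hle : OmegaRho H ≤ OmegaRho G := by
    rw [hH, hG]
    exact Finset.sum_le_sum_of_subset (Finset.subset_univ _)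
  refine ⟨hle, ⟨fun heq => ?_, fun htop => ?_⟩⟩
  · by_contra hne
    obtain ⟨x, hx⟩ : ∃ x : G, x ∉ H := by
      by_contra h
      push_neg at h
      exact hne (Subgroup.eq_top_iff' H |>.2 h)
    have hx1 : x ≠ 1 := fun h => hx (h ▸ H.one_mem)
    have h2 : 2 ≤ orderOf x := by
      have h1 := orderOf_pos x
      have hne1 : orderOf x ≠ 1 := fun h => hx1 (orderOf_eq_one_iff.mp h)
      omega
    have hlt : OmegaRho H < OmegaRho G := by
      rw [hH, hG]
      exact Finset.sum_lt_sum_of_subset (Finset.subset_univ _) (Finset.mem_univ x)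
        (by simpa using hx) (one_le_cardFactors h2) (fun j _ _ => Nat.zero_le _)
    omega
  · subst htop
    rw [hH, hG]
    apply Finset.sum_congr _ fun _ _ => rfl
    simp
end

section
/- For any finite group G and any normal subgroup N of G, Ω_ρ(G/N) ≤ Ω_ρ(G), with equality if and only if N is trivial. -/
/-!
Since `Ω` is additive, `Ω_ρ(G) = ∑_{x ∈ G} Ω(o(x))`. A surjection `φ : G → H` then gives
`Ω_ρ(H) ≤ ∑_{x ∈ G} Ω(o(φ x)) ≤ Ω_ρ(G)`: the first step because every fibre of `φ` is
nonempty, the second because `o(φ x) ∣ o(x)`. A nontrivial `x ∈ ker φ` makes the second step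
strict, since `Ω(o(φ x)) = Ω(1) = 0 < Ω(o(x))`.
-/

open ArithmeticFunction Function
open scoped ArithmeticFunction.Omega

theorem ArithmeticFunction.cardFactors_finset_prod {ι : Type*} {s : Finset ι} {f : ι → ℕ}
    (hf : ∀ i ∈ s, f i ≠ 0) : Ω (∏ i ∈ s, f i) = ∑ i ∈ s, Ω (f i) := by
  rw [Finset.prod_eq_multiset_prod, cardFactors_multiset_prod (Finset.prod_ne_zero_iff.2 hf),
    Multiset.map_map]
  rfl

theorem ArithmeticFunction.cardFactors_le_of_dvd {m n : ℕ} (h : m ∣ n) (hn : n ≠ 0) :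
    Ω m ≤ Ω n := by
  simpa only [cardFactors_apply] using (Nat.primeFactorsList_sublist_of_dvd h hn).length_le

theorem Fintype.sum_le_sum_comp_of_surjective {α β M : Type*} [Fintype α] [Fintype β]
    [AddCommMonoid M] [PartialOrder M] [IsOrderedAddMonoid M] {f : α → β} (hf : Surjective f)
    (g : β → M) (hg : 0 ≤ g) : ∑ b, g b ≤ ∑ a, g (f a) :=
  calc ∑ b, g b = ∑ a ∈ Finset.univ.map ⟨surjInv hf, injective_surjInv hf⟩, g (f a) := by
        simp only [Finset.sum_map, Embedding.coeFn_mk, surjInv_eq]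
    _ ≤ ∑ a, g (f a) :=
        Finset.sum_le_sum_of_subset_of_nonneg (Finset.subset_univ _) fun a _ _ => hg (f a)

section

variable {G H : Type*} [Group G] [Group H]

theorem rho_congr (e : G ≃* H) : rho G = rho H := by
  rw [rho, rho, ← finprod_comp_equiv e.toEquiv]
  exact finprod_congr fun x => (e.orderOf_eq x).symm

theorem omegaRho_congr (e : G ≃* H) : OmegaRho G = OmegaRho H := by
  rw [OmegaRho, OmegaRho, rho_congr e]

theorem omegaRho_eq_sum [Fintype G] : OmegaRho G = ∑ x : G, Ω (orderOf x) := by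
  rw [OmegaRho, rho, finprod_eq_prod_of_fintype,
    cardFactors_finset_prod fun x _ => (orderOf_pos x).ne']

theorem omegaRho_le_sum_cardFactors_orderOf_map [Fintype G] [Fintype H] {f : G →* H}
    (hf : Surjective f) : OmegaRho H ≤ ∑ x : G, Ω (orderOf (f x)) := by
  rw [omegaRho_eq_sum]
  exact Fintype.sum_le_sum_comp_of_surjective hf _ fun _ => Nat.zero_le _

theorem cardFactors_orderOf_map_le [Finite G] (f : G →* H) (x : G) :
    Ω (orderOf (f x)) ≤ Ω (orderOf x) :=
  cardFactors_le_of_dvd (orderOf_map_dvd f x) (orderOf_pos x).ne'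

theorem sum_cardFactors_orderOf_map_le [Fintype G] (f : G →* H) :
    ∑ x : G, Ω (orderOf (f x)) ≤ OmegaRho G := by
  rw [omegaRho_eq_sum]
  exact Finset.sum_le_sum fun x _ => cardFactors_orderOf_map_le f x

theorem sum_cardFactors_orderOf_map_lt [Fintype G] {f : G →* H} (hf : f.ker ≠ ⊥) :
    ∑ x : G, Ω (orderOf (f x)) < OmegaRho G := by
  obtain ⟨x, hx, hx1⟩ := f.ker.bot_or_exists_ne_one.resolve_left hf
  have hlt : Ω (orderOf (f x)) < Ω (orderOf x) := by
    rw [f.mem_ker.1 hx, orderOf_one, cardFactors_one, cardFactors_pos_iff_one_lt]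
    exact lt_of_le_of_ne (orderOf_pos x) (Ne.symm (mt orderOf_eq_one_iff.1 hx1))
  rw [omegaRho_eq_sum]
  exact Finset.sum_lt_sum (fun y _ => cardFactors_orderOf_map_le f y)
    ⟨x, Finset.mem_univ x, hlt⟩

variable [Finite G] {f : G →* H}

theorem omegaRho_le_of_surjective (hf : Surjective f) : OmegaRho H ≤ OmegaRho G := by
  have := Fintype.ofFinite G
  have := Finite.of_surjective f hf
  have := Fintype.ofFinite H
  exact (omegaRho_le_sum_cardFactors_orderOf_map hf).trans (sum_cardFactors_orderOf_map_le f)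

theorem omegaRho_lt_of_surjective (hf : Surjective f) (hker : f.ker ≠ ⊥) :
    OmegaRho H < OmegaRho G := by
  have := Fintype.ofFinite G
  have := Finite.of_surjective f hf
  have := Fintype.ofFinite H
  exact (omegaRho_le_sum_cardFactors_orderOf_map hf).trans_lt (sum_cardFactors_orderOf_map_lt hker)

end

theorem omegaRho_quotient_le (G : Type*) [Group G] [Finite G] (N : Subgroup G) [N.Normal] :
    OmegaRho (G ⧸ N) ≤ OmegaRho G ∧ (OmegaRho (G ⧸ N) = OmegaRho G ↔ N = ⊥) := by
  have hmk := QuotientGroup.mk'_surjective N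
  refine ⟨omegaRho_le_of_surjective hmk, fun heq => ?_, fun hN => ?_⟩
  · by_contra hN
    exact (omegaRho_lt_of_surjective hmk (by rwa [QuotientGroup.ker_mk'])).ne heq
  · subst hN
    exact omegaRho_congr QuotientGroup.quotientBot
end

section
/- For finite groups A and B, ρ(A × B) divides ρ(A)^{|B|} · ρ(B)^{|A|}. Moreover, ρ(A × B) = ρ(A)^{|B|} · ρ(B)^{|A|} if and only if gcd(|A|, |B|) = 1. -/
/-!
Since `o(a, b) = lcm (o a) (o b)`, both sides are products over `A × B`, of `lcm (o a) (o b)` and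
of `o a * o b` respectively, so the divisibility holds factorwise. Because
`gcd * lcm = product`, equality holds iff every pair of orders is coprime; this is implied by
`gcd(|A|, |B|) = 1` (orders divide the group order), and conversely a common prime factor `p` of
`|A|` and `|B|` gives, by Cauchy's theorem, elements of order `p` in both groups.
-/

theorem prod_lcm_eq_prod_mul_iff {ι : Type*} {s : Finset ι} {f g : ι → ℕ}
    (hf : ∀ i ∈ s, f i ≠ 0) (hg : ∀ i ∈ s, g i ≠ 0) :
    ∏ i ∈ s, (f i).lcm (g i) = ∏ i ∈ s, f i * g i ↔ ∀ i ∈ s, (f i).Coprime (g i) := by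
  have hlcm : ∏ i ∈ s, (f i).lcm (g i) ≠ 0 :=
    Finset.prod_ne_zero_iff.2 fun i hi => Nat.lcm_ne_zero (hf i hi) (hg i hi)
  have hsplit : ∏ i ∈ s, f i * g i = (∏ i ∈ s, (f i).lcm (g i)) * ∏ i ∈ s, (f i).gcd (g i) := by
    rw [← Finset.prod_mul_distrib]
    exact Finset.prod_congr rfl fun i _ => (Nat.lcm_mul_gcd (f i) (g i)).symm
  calc ∏ i ∈ s, (f i).lcm (g i) = ∏ i ∈ s, f i * g i
      ↔ ∏ i ∈ s, (f i).gcd (g i) = 1 := by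
        rw [hsplit, eq_comm, Nat.mul_eq_left hlcm]
    _ ↔ ∀ i ∈ s, (f i).Coprime (g i) := Finset.prod_eq_one_iff

section

variable (G A B : Type*) [Group G] [Group A] [Group B]

theorem rho_eq_prod_orderOf [Fintype G] : rho G = ∏ x : G, orderOf x :=
  finprod_eq_prod_of_fintype _

theorem rho_prod_eq_prod_lcm [Fintype A] [Fintype B] :
    rho (A × B) = ∏ x : A × B, (orderOf x.1).lcm (orderOf x.2) := by
  simp only [rho_eq_prod_orderOf, Prod.orderOf]

theorem rho_pow_card_mul_rho_pow_card [Fintype A] [Fintype B] :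
    rho A ^ Nat.card B * rho B ^ Nat.card A = ∏ x : A × B, orderOf x.1 * orderOf x.2 := by
  simp only [rho_eq_prod_orderOf, Fintype.prod_prod_type, Finset.prod_mul_distrib,
    Finset.prod_const, Finset.prod_pow, Finset.card_univ, Nat.card_eq_fintype_card]

theorem forall_coprime_orderOf_iff [Finite A] [Finite B] :
    (∀ (a : A) (b : B), (orderOf a).Coprime (orderOf b)) ↔ (Nat.card A).Coprime (Nat.card B) := by
  refine ⟨fun h => Nat.coprime_of_dvd fun p hp hpA hpB => ?_, fun h a b =>
    (h.coprime_dvd_left (orderOf_dvd_natCard a)).coprime_dvd_right (orderOf_dvd_natCard b)⟩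
  have : Fact p.Prime := ⟨hp⟩
  obtain ⟨a, ha⟩ := exists_prime_orderOf_dvd_card' p hpA
  obtain ⟨b, hb⟩ := exists_prime_orderOf_dvd_card' p hpB
  have hab := h a b
  rw [ha, hb, Nat.coprime_self] at hab
  exact hp.one_lt.ne' hab

end

theorem rho_prod_dvd (A B : Type*) [Group A] [Group B] [Finite A] [Finite B] :
    rho (A × B) ∣ rho A ^ Nat.card B * rho B ^ Nat.card A ∧
    (rho (A × B) = rho A ^ Nat.card B * rho B ^ Nat.card A ↔
      Nat.gcd (Nat.card A) (Nat.card B) = 1) := by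
  have := Fintype.ofFinite A
  have := Fintype.ofFinite B
  rw [rho_prod_eq_prod_lcm, rho_pow_card_mul_rho_pow_card, ← Nat.coprime_iff_gcd_eq_one,
    ← forall_coprime_orderOf_iff, prod_lcm_eq_prod_mul_iff (fun x _ => (orderOf_pos x.1).ne')
      (fun x _ => (orderOf_pos x.2).ne')]
  exact ⟨Finset.prod_dvd_prod_of_dvd _ _ fun x _ => Nat.lcm_dvd_mul _ _,
    by simp only [Finset.mem_univ, forall_const, Prod.forall]⟩
end

section
/- Let G be a finite group of order k·p^α with gcd(k, p) = 1 and p prime. Then k divides the exponent of p in ρ(G), and p − 1 divides the exponent of p in ρ(G), where ρ(G) = ∏_{x∈G} o(x). -/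
open Finset Subgroup MulAction

section PPart

variable {p : ℕ}

private lemma nat_eq_of_dvd_mul_eq {a A b B : ℕ} (hA : A ≠ 0) (hB : B ≠ 0)
    (ha : a ∣ A) (hb : b ∣ B) (h : a * b = A * B) : a = A ∧ b = B := by
  obtain ⟨s, hs⟩ := ha; obtain ⟨t, ht⟩ := hb
  have ha0 : a ≠ 0 := fun h0 => hA (by simp [hs, h0])
  have hb0 : b ≠ 0 := fun h0 => hB (by simp [ht, h0])
  have key : (a * b) * (s * t) = a * b := by
    calc a * b * (s * t) = (a * s) * (b * t) := by ring
    _ = a * b := by rw [← hs, ← ht, h, hs, ht]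
  have hst : s * t = 1 :=
    mul_left_cancel₀ (mul_ne_zero ha0 hb0) (key.trans (mul_one _).symm)
  have hs1 : s = 1 := Nat.dvd_one.mp ⟨t, hst.symm⟩
  have ht1 : t = 1 := by rw [hs1, one_mul] at hst; exact hst
  exact ⟨by rw [hs, hs1, mul_one], by rw [ht, ht1, mul_one]⟩

/-- An exponent which is `1 mod` the `p`-part of `n` and `0 mod` the rest. -/
noncomputable def pExpN (hp : p.Prime) (n : ℕ) : ℕ :=
  if h : n = 0 then 1 else
    (Nat.chineseRemainder ((Nat.coprime_ordCompl hp h).pow_left (n.factorization p)) 1 0).1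

noncomputable def qExpN (hp : p.Prime) (n : ℕ) : ℕ :=
  if h : n = 0 then 1 else
    (Nat.chineseRemainder ((Nat.coprime_ordCompl hp h).pow_left (n.factorization p)) 0 1).1

lemma pExpN_spec (hp : p.Prime) {n : ℕ} (h : n ≠ 0) :
    pExpN hp n ≡ 1 [MOD p ^ n.factorization p] ∧ pExpN hp n ≡ 0 [MOD ordCompl[p] n] := by
  rw [pExpN, dif_neg h]
  exact (Nat.chineseRemainder _ 1 0).2

lemma qExpN_spec (hp : p.Prime) {n : ℕ} (h : n ≠ 0) :
    qExpN hp n ≡ 0 [MOD p ^ n.factorization p] ∧ qExpN hp n ≡ 1 [MOD ordCompl[p] n] := by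
  rw [qExpN, dif_neg h]
  exact (Nat.chineseRemainder _ 0 1).2

variable {G : Type*} [Group G] [Finite G]

noncomputable def pPart (hp : p.Prime) (x : G) : G := x ^ pExpN hp (orderOf x)

noncomputable def pCompl (hp : p.Prime) (x : G) : G := x ^ qExpN hp (orderOf x)

lemma orderOf_ne_zero (x : G) : orderOf x ≠ 0 := (orderOf_pos x).ne'

lemma pPart_mul_pCompl (hp : p.Prime) (x : G) : pPart hp x * pCompl hp x = x := by
  have h := orderOf_ne_zero x
  rw [pPart, pCompl, ← pow_add]
  conv_rhs => rw [← pow_one x]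
  rw [pow_eq_pow_iff_modEq]
  have h1 := (pExpN_spec hp h).1.add (qExpN_spec hp h).1
  have h2 := (pExpN_spec hp h).2.add (qExpN_spec hp h).2
  have key := (Nat.modEq_and_modEq_iff_modEq_mul
    ((Nat.coprime_ordCompl hp h).pow_left ((orderOf x).factorization p))).mp
    ⟨by simpa using h1, by simpa using h2⟩
  rwa [Nat.ordProj_mul_ordCompl_eq_self (orderOf x) p] at key

lemma commute_pPart_pCompl (hp : p.Prime) (x : G) : Commute (pPart hp x) (pCompl hp x) :=
  Commute.pow_pow_self x _ _

lemma orderOf_pPart_and_pCompl (hp : p.Prime) (x : G) :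
    orderOf (pPart hp x) = p ^ ((orderOf x).factorization p) ∧
      orderOf (pCompl hp x) = ordCompl[p] (orderOf x) := by
  have h := orderOf_ne_zero x
  set n := orderOf x with hn
  set a := n.factorization p
  have h1 : orderOf (pPart hp x) ∣ p ^ a := by
    apply orderOf_dvd_of_pow_eq_one
    rw [pPart, ← pow_mul]
    apply orderOf_dvd_iff_pow_eq_one.mp
    rw [← hn]
    calc n = p ^ a * ordCompl[p] n := (Nat.ordProj_mul_ordCompl_eq_self n p).symm
    _ ∣ pExpN hp n * p ^ a := by
        rw [mul_comm]
        exact Nat.mul_dvd_mul ((Nat.modEq_zero_iff_dvd).mp (pExpN_spec hp h).2) dvd_rfl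
  have h2 : orderOf (pCompl hp x) ∣ ordCompl[p] n := by
    apply orderOf_dvd_of_pow_eq_one
    rw [pCompl, ← pow_mul]
    apply orderOf_dvd_iff_pow_eq_one.mp
    rw [← hn]
    calc n = p ^ a * ordCompl[p] n := (Nat.ordProj_mul_ordCompl_eq_self n p).symm
    _ ∣ qExpN hp n * ordCompl[p] n := by
        exact Nat.mul_dvd_mul ((Nat.modEq_zero_iff_dvd).mp (qExpN_spec hp h).1) dvd_rfl
  have h3 : n ∣ orderOf (pPart hp x) * orderOf (pCompl hp x) := by
    conv_lhs => rw [hn, ← pPart_mul_pCompl hp x]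
    exact (commute_pPart_pCompl hp x).orderOf_mul_dvd_mul_orderOf
  have h4 : orderOf (pPart hp x) * orderOf (pCompl hp x) = p ^ a * ordCompl[p] n := by
    apply Nat.dvd_antisymm (mul_dvd_mul h1 h2)
    rw [Nat.ordProj_mul_ordCompl_eq_self n p]
    exact h3
  exact nat_eq_of_dvd_mul_eq (pow_ne_zero _ hp.pos.ne') (Nat.ordCompl_pos p h).ne' h1 h2 h4

lemma orderOf_pPart (hp : p.Prime) (x : G) :
    orderOf (pPart hp x) = p ^ ((orderOf x).factorization p) :=
  (orderOf_pPart_and_pCompl hp x).1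

lemma orderOf_pCompl (hp : p.Prime) (x : G) :
    orderOf (pCompl hp x) = ordCompl[p] (orderOf x) :=
  (orderOf_pPart_and_pCompl hp x).2

lemma pPart_isP (hp : p.Prime) (x : G) : ∃ b, orderOf (pPart hp x) = p ^ b :=
  ⟨_, orderOf_pPart hp x⟩

lemma pCompl_not_dvd (hp : p.Prime) (x : G) : ¬ p ∣ orderOf (pCompl hp x) := by
  rw [orderOf_pCompl]
  exact Nat.not_dvd_ordCompl hp (orderOf_ne_zero x)

/-- Uniqueness of the decomposition. -/
lemma pPart_pCompl_unique (hp : p.Prime) {u v : G} (hu : ∃ b, orderOf u = p ^ b)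
    (hv : ¬ p ∣ orderOf v) (hc : Commute u v) :
    pPart hp (u * v) = u ∧ pCompl hp (u * v) = v := by
  obtain ⟨b, hb⟩ := hu
  have hvne : orderOf v ≠ 0 := orderOf_ne_zero v
  have hune : orderOf u ≠ 0 := orderOf_ne_zero u
  have hcop : Nat.Coprime (orderOf u) (orderOf v) := by
    rw [hb]; exact Nat.Coprime.pow_left _ (hp.coprime_iff_not_dvd.mpr hv)
  have hn : orderOf (u * v) = orderOf u * orderOf v :=
    hc.orderOf_mul_eq_mul_orderOf_of_coprime hcop
  have hnne : orderOf (u * v) ≠ 0 := orderOf_ne_zero _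
  have hfac : (orderOf (u * v)).factorization p = b := by
    rw [hn, Nat.factorization_mul hune hvne, Finsupp.add_apply,
      Nat.factorization_eq_zero_of_not_dvd hv, hb, hp.factorization_pow,
      Finsupp.single_eq_same, add_zero]
  have hproj : p ^ ((orderOf (u * v)).factorization p) = orderOf u := by rw [hfac, hb]
  have hcompl : ordCompl[p] (orderOf (u * v)) = orderOf v := by
    rw [hfac, hn, hb, Nat.mul_div_cancel_left _ (pow_pos hp.pos b)]
  have hcp : pExpN hp (orderOf (u * v)) ≡ 1 [MOD orderOf u] := by
    rw [← hproj]; exact (pExpN_spec hp hnne).1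
  have hcp0 : pExpN hp (orderOf (u * v)) ≡ 0 [MOD orderOf v] := by
    rw [← hcompl]; exact (pExpN_spec hp hnne).2
  have hcq : qExpN hp (orderOf (u * v)) ≡ 0 [MOD orderOf u] := by
    rw [← hproj]; exact (qExpN_spec hp hnne).1
  have hcq1 : qExpN hp (orderOf (u * v)) ≡ 1 [MOD orderOf v] := by
    rw [← hcompl]; exact (qExpN_spec hp hnne).2
  constructor
  · rw [pPart, hc.mul_pow]
    have h1 : u ^ pExpN hp (orderOf (u * v)) = u ^ 1 := pow_eq_pow_iff_modEq.mpr hcp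
    have h2 : v ^ pExpN hp (orderOf (u * v)) = v ^ 0 := pow_eq_pow_iff_modEq.mpr hcp0
    rw [h1, h2, pow_one, pow_zero, mul_one]
  · rw [pCompl, hc.mul_pow]
    have h1 : u ^ qExpN hp (orderOf (u * v)) = u ^ 0 := pow_eq_pow_iff_modEq.mpr hcq
    have h2 : v ^ qExpN hp (orderOf (u * v)) = v ^ 1 := pow_eq_pow_iff_modEq.mpr hcq1
    rw [h1, h2, pow_one, pow_zero, one_mul]

lemma orderOf_conj' (g x : G) : orderOf (g * x * g⁻¹) = orderOf x := by
  have := orderOf_injective (MulAut.conj g).toMonoidHom (MulEquiv.injective _) x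
  simpa [MulAut.conj_apply] using this

lemma pPart_conj (hp : p.Prime) (g x : G) :
    pPart hp (g * x * g⁻¹) = g * pPart hp x * g⁻¹ := by
  rw [pPart, pPart, orderOf_conj', conj_pow]

/-- The fiber of `pPart` over a `p`-element `u` is in bijection with the `p`-regular
elements of the centralizer of `u`. -/
lemma card_fiber_of_pElt (hp : p.Prime) (u : G) (hu : ∃ b, orderOf u = p ^ b) :
    Nat.card {x : G // pPart hp x = u} =
      Nat.card {v : centralizer ({u} : Set G) // ¬ p ∣ orderOf v} := by
  apply Nat.card_congr
  refine ⟨fun y => ⟨⟨pCompl hp y.1, ?_⟩, ?_⟩, fun v => ⟨u * v.1.1, ?_⟩, ?_, ?_⟩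
  · obtain ⟨x, hx⟩ := y
    show pCompl hp x ∈ centralizer {u}
    rw [mem_centralizer_singleton_iff, ← hx]
    exact ((commute_pPart_pCompl hp x)).eq.symm
  · rw [Subgroup.orderOf_mk]
    exact pCompl_not_dvd hp y.1
  · obtain ⟨⟨v, hv1⟩, hv2⟩ := v
    rw [Subgroup.orderOf_mk] at hv2
    have hc : Commute u v := (mem_centralizer_singleton_iff.mp hv1).symm
    exact (pPart_pCompl_unique hp hu hv2 hc).1
  · rintro ⟨x, hx⟩
    apply Subtype.ext
    show u * pCompl hp x = x
    rw [← hx]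
    exact pPart_mul_pCompl hp x
  · rintro ⟨⟨v, hv1⟩, hv2⟩
    rw [Subgroup.orderOf_mk] at hv2
    have hc : Commute u v := (mem_centralizer_singleton_iff.mp hv1).symm
    apply Subtype.ext
    apply Subtype.ext
    show pCompl hp (u * v) = v
    exact (pPart_pCompl_unique hp hu hv2 hc).2

lemma card_fiber_of_not_pElt (hp : p.Prime) (u : G) (hu : ¬ ∃ b, orderOf u = p ^ b) :
    Nat.card {x : G // pPart hp x = u} = 0 := by
  have : IsEmpty {x : G // pPart hp x = u} :=
    ⟨fun x => hu (x.2 ▸ pPart_isP hp x.1)⟩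
  exact Nat.card_of_isEmpty

lemma card_fiber_conj (hp : p.Prime) (g u : G) :
    Nat.card {x : G // pPart hp x = g * u * g⁻¹} = Nat.card {x : G // pPart hp x = u} := by
  apply Nat.card_congr
  refine ⟨fun y => ⟨g⁻¹ * y.1 * g, ?_⟩, fun y => ⟨g * y.1 * g⁻¹, ?_⟩, ?_, ?_⟩
  · obtain ⟨x, hx⟩ := y
    show pPart hp (g⁻¹ * x * g) = u
    have h1 : g⁻¹ * x * g = g⁻¹ * x * g⁻¹⁻¹ := by group
    rw [h1, pPart_conj hp g⁻¹ x, hx]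
    group
  · obtain ⟨x, hx⟩ := y
    show pPart hp (g * x * g⁻¹) = g * u * g⁻¹
    rw [pPart_conj hp g x, hx]
  · rintro ⟨x, hx⟩; apply Subtype.ext; show g * (g⁻¹ * x * g) * g⁻¹ = x; group
  · rintro ⟨x, hx⟩; apply Subtype.ext; show g⁻¹ * (g * x * g⁻¹) * g = x; group

lemma sum_pPart [Fintype G] (hp : p.Prime) (w : G → ℕ) :
    ∑ x : G, w (pPart hp x) = ∑ u : G, Nat.card {x : G // pPart hp x = u} * w u := by
  classical
  rw [← Finset.sum_fiberwise_of_maps_to (g := pPart hp)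
    (fun x _ => Finset.mem_univ (pPart hp x)) (fun x => w (pPart hp x))]
  refine Finset.sum_congr rfl fun u _ => ?_
  rw [Finset.sum_congr rfl (fun x hx => by rw [(Finset.mem_filter.mp hx).2])]
  rw [Finset.sum_const, smul_eq_mul]
  congr 1
  rw [Nat.card_eq_fintype_card, Fintype.card_subtype]

end PPart

section OrbitSum

/-- If a `ℕ`-valued function on a finite type is invariant under a group action and
`d` divides (size of orbit) * (value) for every point, then `d` divides the total sum. -/
lemma dvd_sum_of_orbit {Γ X : Type*} [Group Γ] [Finite Γ] [MulAction Γ X] [Fintype X]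
    (f : X → ℕ) (hf : ∀ (g : Γ) (x : X), f (g • x) = f x) {d : ℕ}
    (hd : ∀ x : X, d ∣ Nat.card (MulAction.orbit Γ x) * f x) : d ∣ ∑ x : X, f x := by
  classical
  set s := MulAction.orbitRel Γ X with hs
  have key : ∑ x : X, f x
      = ∑ y : Quotient s, ∑ x ∈ Finset.univ.filter (fun x => Quotient.mk s x = y), f x :=
    (Finset.sum_fiberwise_of_maps_to (fun x _ => Finset.mem_univ _) f).symm
  rw [key]
  apply Finset.dvd_sum
  intro y _
  obtain ⟨x₀, rfl⟩ := Quotient.exists_rep y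
  have hmem : ∀ x, Quotient.mk s x = Quotient.mk s x₀ ↔ x ∈ MulAction.orbit Γ x₀ := by
    intro x
    rw [Quotient.eq]
    exact MulAction.orbitRel_apply
  have hconst : ∀ x ∈ Finset.univ.filter (fun x => Quotient.mk s x = Quotient.mk s x₀),
      f x = f x₀ := by
    intro x hx
    obtain ⟨g, hg⟩ := (hmem x).mp (Finset.mem_filter.mp hx).2
    rw [← hg]; exact hf g x₀
  rw [Finset.sum_congr rfl hconst, Finset.sum_const, smul_eq_mul]
  have hcard : (Finset.univ.filter (fun x => Quotient.mk s x = Quotient.mk s x₀)).card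
      = Nat.card (MulAction.orbit Γ x₀) := by
    rw [← Fintype.card_subtype, ← Nat.card_eq_fintype_card]
    exact Nat.card_congr (Equiv.subtypeEquivRight hmem)
  rw [hcard]
  exact hd x₀

end OrbitSum

section KeyT

variable {p : ℕ}

lemma mem_center_conj_iff {H : Type*} [Group H] (g u : H) :
    g * u * g⁻¹ ∈ Subgroup.center H ↔ u ∈ Subgroup.center H := by
  constructor
  · intro hw
    have hcomm := Subgroup.mem_center_iff.mp hw g⁻¹
    have hu : u = g⁻¹ * (g * u * g⁻¹) * g := by group
    have : g⁻¹ * (g * u * g⁻¹) * g = g * u * g⁻¹ := by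
      rw [hcomm, mul_assoc, inv_mul_cancel, mul_one]
    rw [hu, this]
    exact hw
  · intro hu
    have hcomm := Subgroup.mem_center_iff.mp hu g
    have : g * u * g⁻¹ = u := by rw [hcomm, mul_assoc, mul_inv_cancel, mul_one]
    rw [this]
    exact hu

lemma card_stabilizer_conjAct {H : Type*} [Group H] (u : H) :
    Nat.card (MulAction.stabilizer (ConjAct H) u) = Nat.card (centralizer ({u} : Set H)) := by
  apply Nat.card_congr
  refine ⟨fun γ => ⟨ConjAct.ofConjAct γ.1, ?_⟩, fun c => ⟨ConjAct.toConjAct c.1, ?_⟩, ?_, ?_⟩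
  · have h2 := γ.2
    rw [MulAction.mem_stabilizer_iff, ConjAct.smul_def] at h2
    rw [mem_centralizer_singleton_iff]
    exact mul_inv_eq_iff_eq_mul.mp h2
  · rw [MulAction.mem_stabilizer_iff, ConjAct.smul_def, ConjAct.ofConjAct_toConjAct]
    exact mul_inv_eq_iff_eq_mul.mpr (mem_centralizer_singleton_iff.mp c.2)
  · intro γ; ext; simp
  · intro c; ext; simp

lemma nat_card_orbit_mul_card_stabilizer {Γ X : Type*} [Group Γ] [Finite Γ] [MulAction Γ X]
    (x : X) :
    Nat.card (MulAction.orbit Γ x) * Nat.card (MulAction.stabilizer Γ x) = Nat.card Γ := by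
  rw [Nat.card_congr (MulAction.orbitEquivQuotientStabilizer Γ x), mul_comm,
    ← Subgroup.index_eq_card]
  exact Subgroup.card_mul_index _

lemma nat_card_conj_orbit_mul {H : Type*} [Group H] [Finite H] (u : H) :
    Nat.card (MulAction.orbit (ConjAct H) u) * Nat.card (centralizer ({u} : Set H))
      = Nat.card H := by
  haveI : Finite (ConjAct H) := Finite.of_equiv H ConjAct.toConjAct.toEquiv
  have h1 := nat_card_orbit_mul_card_stabilizer (Γ := ConjAct H) u
  rw [card_stabilizer_conjAct u] at h1
  rw [h1]
  exact Nat.card_congr ConjAct.toConjAct.toEquiv.symm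

open scoped IsMulCommutative in
/-- **Key theorem** (a special case of Frobenius' divisibility theorem):
the `p'`-part of `|H|` divides the number of `p`-regular elements of `H`. -/
theorem key_T_aux (hp : p.Prime) : ∀ (N : ℕ), ∀ (H : Type u) [Group H] [Finite H],
    Nat.card H = N → ordCompl[p] (Nat.card H) ∣ Nat.card {v : H // ¬ p ∣ orderOf v} := by
  intro N
  induction N using Nat.strong_induction_on with
  | _ N ih =>
  intro H _ _ hN
  classical
  letI : Fintype H := Fintype.ofFinite H
  haveI : Fact p.Prime := ⟨hp⟩
  set K := ordCompl[p] (Nat.card H) with hK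
  have hH0 : Nat.card H ≠ 0 := Nat.card_pos.ne'
  set c : H → ℕ := fun u => Nat.card {x : H // pPart hp x = u} with hc
  set R : ℕ := Nat.card {v : H // ¬ p ∣ orderOf v} with hR
  have hid : (Nat.card H) = ∑ u : H, c u := by
    have h0 := sum_pPart (G := H) hp (fun _ => 1)
    simp only [mul_one] at h0
    calc Nat.card H = ∑ _x : H, 1 := by simp [Nat.card_eq_fintype_card]
    _ = ∑ u : H, c u := h0
  have hsplit : ∑ u : H, c u =
      (∑ u ∈ Finset.univ.filter (fun u => u ∈ Subgroup.center H), c u) +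
      ∑ u ∈ Finset.univ.filter (fun u => u ∉ Subgroup.center H), c u :=
    (Finset.sum_filter_add_sum_filter_not _ _ _).symm
  -- the sum over central elements
  have hcentral : ∀ u ∈ Subgroup.center H, c u = if ∃ b, orderOf u = p ^ b then R else 0 := by
    intro u hu
    by_cases hpe : ∃ b, orderOf u = p ^ b
    · rw [if_pos hpe]
      show Nat.card {x : H // pPart hp x = u} = R
      rw [card_fiber_of_pElt hp u hpe, hR]
      apply Nat.card_congr
      refine ⟨fun v => ⟨v.1.1, ?_⟩, fun w => ⟨⟨w.1, ?_⟩, ?_⟩, ?_, ?_⟩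
      · rw [Subgroup.orderOf_coe]
        exact v.2
      · rw [mem_centralizer_singleton_iff]
        exact Subgroup.mem_center_iff.mp hu w.1
      · rw [Subgroup.orderOf_mk]
        exact w.2
      · intro v; apply Subtype.ext; apply Subtype.ext; rfl
      · intro w; apply Subtype.ext; rfl
    · rw [if_neg hpe]
      exact card_fiber_of_not_pElt hp u hpe
  set P0 := (Finset.univ.filter (fun u => u ∈ Subgroup.center H ∧ ∃ b, orderOf u = p ^ b)).card
    with hP0def
  have hcentsum : (∑ u ∈ Finset.univ.filter (fun u => u ∈ Subgroup.center H), c u) = P0 * R := by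
    rw [Finset.sum_congr rfl (fun u hu => hcentral u (Finset.mem_filter.mp hu).2)]
    rw [Finset.sum_ite, Finset.sum_const, Finset.sum_const_zero, add_zero, smul_eq_mul,
      Finset.filter_filter, hP0def]
  -- P0 is a power of p
  have hP0 : ∃ s, P0 = p ^ s := by
    have hcardeq : P0 = Nat.card (CommGroup.primaryComponent (Subgroup.center H) p) := by
      rw [hP0def, ← Fintype.card_subtype, ← Nat.card_eq_fintype_card]
      apply Nat.card_congr
      refine ⟨fun u => ⟨⟨u.1, u.2.1⟩, ?_⟩, fun z => ⟨z.1.1, z.1.2, ?_⟩, ?_, ?_⟩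
      · obtain ⟨b, hb⟩ := u.2.2
        exact ⟨b, by rw [← orderOf_dvd_iff_pow_eq_one, Subgroup.orderOf_mk, hb]⟩
      · obtain ⟨n, hn⟩ := z.2
        obtain ⟨m, -, hm⟩ := (Nat.dvd_prime_pow hp).mp (orderOf_dvd_of_pow_eq_one hn)
        exact ⟨m, by rw [Subgroup.orderOf_coe]; exact hm⟩
      · intro u; ext; rfl
      · intro z; ext; rfl
    obtain ⟨s, hs⟩ := IsPGroup.exists_card_eq
      (CommGroup.primaryComponent.isPGroup (G := Subgroup.center H) (p := p))
    exact ⟨s, by rw [hcardeq, hs]⟩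
  -- the noncentral part is divisible by K
  have hnon : K ∣ ∑ u ∈ Finset.univ.filter (fun u => u ∉ Subgroup.center H), c u := by
    have heq : ∑ u ∈ Finset.univ.filter (fun u => u ∉ Subgroup.center H), c u
        = ∑ u : H, (if u ∈ Subgroup.center H then 0 else c u) := by
      rw [Finset.sum_filter]
      refine Finset.sum_congr rfl fun u _ => ?_
      by_cases h : u ∈ Subgroup.center H <;> simp [h]
    rw [heq]
    apply dvd_sum_of_orbit (Γ := ConjAct H) (fun u => if u ∈ Subgroup.center H then 0 else c u)
    · intro γ u
      rw [ConjAct.smul_def]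
      set g := ConjAct.ofConjAct γ with hg
      by_cases h : u ∈ Subgroup.center H
      · rw [if_pos h, if_pos ((mem_center_conj_iff g u).mpr h)]
      · rw [if_neg h, if_neg (fun hcc => h ((mem_center_conj_iff g u).mp hcc))]
        exact card_fiber_conj hp g u
    · intro u
      by_cases h : u ∈ Subgroup.center H
      · rw [if_pos h, mul_zero]
        exact dvd_zero K
      rw [if_neg h]
      show K ∣ Nat.card (MulAction.orbit (ConjAct H) u) * c u
      by_cases hpe : ∃ b, orderOf u = p ^ b
      swap
      · rw [hc]
        simp only [card_fiber_of_not_pElt hp u hpe, mul_zero]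
        exact dvd_zero K
      have hcu : c u = Nat.card {v : centralizer ({u} : Set H) // ¬ p ∣ orderOf v} :=
        card_fiber_of_pElt hp u hpe
      set C := centralizer ({u} : Set H) with hC
      have hCproper : C ≠ ⊤ := by
        intro htop
        exact h (centralizer_eq_top_iff_subset.mp htop (Set.mem_singleton u))
      have hmulC : Nat.card C * C.index = Nat.card H := Subgroup.card_mul_index C
      have hCpos : 0 < Nat.card C := Nat.card_pos
      have hidx1 : C.index ≠ 1 := fun h1 => hCproper (Subgroup.index_eq_one.mp h1)
      have hidx0 : C.index ≠ 0 := by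
        intro h0; rw [h0, mul_zero] at hmulC; exact hH0 hmulC.symm
      have hlt : Nat.card C < Nat.card H := by
        rw [← hmulC]
        have h2le : 2 ≤ C.index := by omega
        calc Nat.card C = Nat.card C * 1 := (mul_one _).symm
        _ < Nat.card C * 2 := by omega
        _ ≤ Nat.card C * C.index := Nat.mul_le_mul_left _ h2le
      have hih := ih (Nat.card C) (hN ▸ hlt) C rfl
      have horb : Nat.card (MulAction.orbit (ConjAct H) u) * Nat.card C = Nat.card H :=
        nat_card_conj_orbit_mul u
      have hKfact : K = ordCompl[p] (Nat.card (MulAction.orbit (ConjAct H) u))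
          * ordCompl[p] (Nat.card C) := by
        rw [hK, ← horb, Nat.ordCompl_mul]
      rw [hcu, hKfact]
      exact mul_dvd_mul (Nat.ordCompl_dvd _ p) hih
  -- conclude
  have hKH : K ∣ Nat.card H := Nat.ordCompl_dvd _ p
  have h1 : K ∣ P0 * R + ∑ u ∈ Finset.univ.filter (fun u => u ∉ Subgroup.center H), c u := by
    rw [← hcentsum, ← hsplit, ← hid]
    exact hKH
  have h2 : K ∣ P0 * R := (Nat.dvd_add_iff_left hnon).mpr h1
  obtain ⟨s, hs⟩ := hP0
  have hcop : Nat.Coprime K P0 := by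
    rw [hs]
    exact Nat.Coprime.pow_right _ ((Nat.coprime_ordCompl hp hH0).symm)
  exact hcop.dvd_of_dvd_mul_left h2

theorem key_T (hp : p.Prime) (H : Type u) [Group H] [Finite H] :
    ordCompl[p] (Nat.card H) ∣ Nat.card {v : H // ¬ p ∣ orderOf v} :=
  key_T_aux hp (Nat.card H) H rfl

end KeyT

section Main

theorem dvd_factorization_rho (G : Type*) [Group G] [Finite G] (k p α : ℕ)
    (hp : p.Prime) (hcop : Nat.gcd k p = 1) (h : Nat.card G = k * p ^ α) :
    k ∣ (rho G).factorization p ∧ (p - 1) ∣ (rho G).factorization p := by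
  classical
  letI : Fintype G := Fintype.ofFinite G
  haveI : Fact p.Prime := ⟨hp⟩
  have hN0 : Nat.card G ≠ 0 := Nat.card_pos.ne'
  have hE : (rho G).factorization p = ∑ x : G, (orderOf x).factorization p := by
    rw [rho, finprod_eq_prod_of_fintype,
      Nat.factorization_prod (fun x _ => orderOf_ne_zero x), Finset.sum_apply']
  have hk0 : k ≠ 0 := by
    rintro rfl
    rw [zero_mul] at h
    exact hN0 h
  have hpk : ¬ p ∣ k := by
    intro hd
    have h1 : p ∣ Nat.gcd k p := Nat.dvd_gcd hd dvd_rfl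
    rw [hcop] at h1
    exact hp.one_lt.ne' (Nat.dvd_one.mp h1)
  have hfacN : (Nat.card G).factorization p = α := by
    rw [h, Nat.factorization_mul hk0 (pow_ne_zero α hp.pos.ne'), Finsupp.add_apply,
      Nat.factorization_eq_zero_of_not_dvd hpk, hp.factorization_pow,
      Finsupp.single_eq_same, zero_add]
  have hkeq : ordCompl[p] (Nat.card G) = k := by
    rw [hfacN, h, Nat.mul_div_cancel _ (pow_pos hp.pos α)]
  rw [hE]
  constructor
  · -- k divides the exponent
    have hsum : ∑ x : G, (orderOf x).factorization p
        = ∑ x : G, (orderOf (pPart hp x)).factorization p := by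
      refine Finset.sum_congr rfl fun x _ => ?_
      rw [orderOf_pPart hp x, hp.factorization_pow, Finsupp.single_eq_same]
    rw [hsum]
    set w : G → ℕ := fun u => (orderOf u).factorization p with hw
    rw [sum_pPart hp w, ← hkeq]
    apply dvd_sum_of_orbit (Γ := ConjAct G)
      (fun u => Nat.card {x : G // pPart hp x = u} * w u)
    · intro γ u
      rw [ConjAct.smul_def]
      set g := ConjAct.ofConjAct γ with hg
      rw [card_fiber_conj hp g u]
      congr 1
      show (orderOf (g * u * g⁻¹)).factorization p = (orderOf u).factorization p
      rw [orderOf_conj']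
    · intro u
      by_cases hpe : ∃ b, orderOf u = p ^ b
      swap
      · simp only [card_fiber_of_not_pElt hp u hpe, zero_mul, mul_zero]
        exact dvd_zero _
      set C := centralizer ({u} : Set G) with hC
      have horb : Nat.card (MulAction.orbit (ConjAct G) u) * Nat.card C = Nat.card G :=
        nat_card_conj_orbit_mul u
      have hfact : ordCompl[p] (Nat.card G)
          = ordCompl[p] (Nat.card (MulAction.orbit (ConjAct G) u)) * ordCompl[p] (Nat.card C) := by
        rw [← horb, Nat.ordCompl_mul]
      have h1 : ordCompl[p] (Nat.card G)
          ∣ Nat.card (MulAction.orbit (ConjAct G) u) * Nat.card {v : C // ¬ p ∣ orderOf v} := by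
        rw [hfact]
        exact mul_dvd_mul (Nat.ordCompl_dvd _ p) (key_T hp C)
      rw [card_fiber_of_pElt hp u hpe, ← mul_assoc]
      exact h1.mul_right _
  · -- p - 1 divides the exponent
    haveI : NeZero (Nat.card G) := ⟨hN0⟩
    have hpowcong : ∀ (x : G) (j j' : ℕ), j ≡ j' [MOD Nat.card G] → x ^ j = x ^ j' := by
      intro x j j' hj
      rw [pow_eq_pow_iff_modEq]
      exact hj.of_dvd (orderOf_dvd_natCard x)
    letI smulInst : SMul (ZMod (Nat.card G))ˣ G :=
      ⟨fun a x => x ^ ((a : ZMod (Nat.card G)).val)⟩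
    letI actInst : MulAction (ZMod (Nat.card G))ˣ G :=
      { one_smul := by
          intro x
          show x ^ ((1 : ZMod (Nat.card G))).val = x
          rw [ZMod.val_one_eq_one_mod]
          rw [hpowcong x _ 1 (Nat.mod_modEq 1 _), pow_one]
        mul_smul := by
          intro a b x
          show x ^ ((a * b : (ZMod (Nat.card G))ˣ) : ZMod (Nat.card G)).val
            = (x ^ ((b : ZMod (Nat.card G))).val) ^ ((a : ZMod (Nat.card G))).val
          rw [← pow_mul, Units.val_mul, ZMod.val_mul]
          apply hpowcong
          calc ((a : ZMod (Nat.card G)).val * (b : ZMod (Nat.card G)).val) % Nat.card G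
              ≡ (a : ZMod (Nat.card G)).val * (b : ZMod (Nat.card G)).val
                [MOD Nat.card G] := Nat.mod_modEq _ _
          _ = (b : ZMod (Nat.card G)).val * (a : ZMod (Nat.card G)).val := mul_comm _ _ }
    apply dvd_sum_of_orbit (Γ := (ZMod (Nat.card G))ˣ) (fun x => (orderOf x).factorization p)
    · intro a x
      show (orderOf (x ^ ((a : ZMod (Nat.card G))).val)).factorization p
        = (orderOf x).factorization p
      rw [Nat.Coprime.orderOf_pow
        (((ZMod.val_coe_unit_coprime a).coprime_dvd_right (orderOf_dvd_natCard x)).symm)]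
    · intro x
      by_cases h0 : (orderOf x).factorization p = 0
      · rw [h0, mul_zero]
        exact dvd_zero _
      have hpx : p ∣ orderOf x := Nat.dvd_of_factorization_pos h0
      have hpN : p ∣ Nat.card G := hpx.trans (orderOf_dvd_natCard x)
      set Φ := ZMod.unitsMap hpN with hΦ
      have hsurj : Function.Surjective Φ := ZMod.unitsMap_surjective hpN
      have hstab : MulAction.stabilizer (ZMod (Nat.card G))ˣ x ≤ Φ.ker := by
        intro a ha
        rw [MulAction.mem_stabilizer_iff] at ha
        have ha' : x ^ ((a : ZMod (Nat.card G))).val = x ^ 1 := by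
          rw [pow_one]; exact ha
        have hmod : ((a : ZMod (Nat.card G))).val ≡ 1 [MOD orderOf x] :=
          pow_eq_pow_iff_modEq.mp ha'
        have hmodp : ((a : ZMod (Nat.card G))).val ≡ 1 [MOD p] := hmod.of_dvd hpx
        rw [MonoidHom.mem_ker]
        apply Units.ext
        show (ZMod.castHom hpN (ZMod p)) (a : ZMod (Nat.card G)) = 1
        rw [ZMod.castHom_apply, ← ZMod.natCast_val]
        calc (((a : ZMod (Nat.card G))).val : ZMod p)
            = ((1 : ℕ) : ZMod p) := (ZMod.natCast_eq_natCast_iff _ _ _).mpr hmodp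
        _ = 1 := Nat.cast_one
      have hindex : (p - 1) ∣ Nat.card (MulAction.orbit (ZMod (Nat.card G))ˣ x) := by
        have h1 : Nat.card (MulAction.orbit (ZMod (Nat.card G))ˣ x)
            = (MulAction.stabilizer (ZMod (Nat.card G))ˣ x).index := by
          rw [Nat.card_congr (MulAction.orbitEquivQuotientStabilizer _ x)]
          exact (Subgroup.index_eq_card _).symm
        have h2 : Φ.ker.index ∣ (MulAction.stabilizer (ZMod (Nat.card G))ˣ x).index :=
          Subgroup.index_dvd_of_le hstab
        have h3 : Φ.ker.index = p - 1 := by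
          rw [Subgroup.index_ker, MonoidHom.range_eq_top.mpr hsurj]
          rw [Nat.card_congr Subgroup.topEquiv.toEquiv, Nat.card_eq_fintype_card,
            ZMod.card_units_eq_totient, Nat.totient_prime hp]
        rw [h1, ← h3]
        exact h2
      exact hindex.mul_right _

end Main
end

section
/- Let G be a finite group and p an odd prime dividing |G|. Then the exponent of p in ρ(G) = ∏_{x∈G} o(x) is even. Moreover, if 2 divides |G|, then the exponent of 2 in ρ(G) is odd. -/
/-!
Since `vₚ(ρ(G)) = ∑ₓ vₚ(o(x))` and `o(x⁻¹) = o(x)`, the terms of `x` and `x⁻¹` cancel modulo 2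
whenever `x⁻¹ ≠ x`, so only the identity and the involutions count. They have order 1 or 2, hence
contribute nothing for odd `p`, and exactly `1` each for `p = 2`. The same pairing gives
`|{x | x⁻¹ = x}| ≡ |G| (mod 2)`, so when `|G|` is even the number of involutions is odd.
-/

open Finset

section Involution

variable {α R : Type*} [Fintype α] [DecidableEq α] [Ring R] [CharP R 2]

theorem sum_eq_sum_filter_apply_eq_self_of_involutive {σ : α → α} (hσ : Function.Involutive σ)
    (f : α → R) (hf : ∀ a, f (σ a) = f a) : ∑ a, f a = ∑ a with σ a = a, f a := by
  rw [← sum_filter_add_sum_filter_not univ (fun a => σ a = a), add_eq_left]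
  refine sum_involution (fun a _ => σ a) (fun a _ => by rw [hf, CharTwo.add_self_eq_zero])
    (fun a ha _ => (mem_filter.1 ha).2) (fun a ha => ?_) (fun a _ => hσ a)
  simpa [hσ a, eq_comm] using ha

end Involution

section InvEqSelf

variable {G R : Type*} [Group G] [Fintype G] [DecidableEq G] [Ring R] [CharP R 2]

theorem sum_eq_sum_filter_inv_eq_self (f : G → R) (hf : ∀ x, f x⁻¹ = f x) :
    ∑ x, f x = ∑ x with x⁻¹ = x, f x :=
  sum_eq_sum_filter_apply_eq_self_of_involutive inv_involutive f hf

variable (G R) in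
theorem card_filter_inv_eq_self_cast : (#{x : G | x⁻¹ = x} : R) = Nat.card G := by
  simpa [Nat.card_eq_fintype_card] using
    (sum_eq_sum_filter_inv_eq_self (fun _ : G => (1 : R)) fun _ => rfl).symm

end InvEqSelf

section OrderOf

variable {G : Type*} [Group G] {x : G}

theorem sq_eq_one_of_inv_eq_self (h : x⁻¹ = x) : x ^ 2 = 1 := by
  rw [sq, ← inv_eq_iff_mul_eq_one, h]

theorem orderOf_dvd_two_of_inv_eq_self (h : x⁻¹ = x) : orderOf x ∣ 2 :=
  orderOf_dvd_iff_pow_eq_one.2 (sq_eq_one_of_inv_eq_self h)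

theorem factorization_orderOf_eq_zero_of_inv_eq_self {p : ℕ} (hp : p.Prime) (hp2 : p ≠ 2)
    (h : x⁻¹ = x) : (orderOf x).factorization p = 0 :=
  Nat.factorization_eq_zero_of_not_dvd fun hdvd =>
    hp2 ((Nat.prime_dvd_prime_iff_eq hp Nat.prime_two).1
      (hdvd.trans (orderOf_dvd_two_of_inv_eq_self h)))

theorem factorization_two_orderOf_of_inv_eq_self (h : x⁻¹ = x) (h1 : x ≠ 1) :
    (orderOf x).factorization 2 = 1 := by
  rw [orderOf_eq_prime (sq_eq_one_of_inv_eq_self h) h1,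
    Nat.prime_two.factorization_self]

variable [Fintype G] [DecidableEq G]

theorem sum_factorization_two_orderOf_filter_inv_eq_self_add_one :
    ∑ x : G with x⁻¹ = x, (orderOf x).factorization 2 + 1 = #{x : G | x⁻¹ = x} := by
  have h1 : (1 : G) ∈ ({x | x⁻¹ = x} : Finset G) := by simp
  rw [← sum_erase_add _ _ h1, orderOf_one, Nat.factorization_one, Finsupp.zero_apply, add_zero,
    sum_congr rfl fun x hx => factorization_two_orderOf_of_inv_eq_self
      (mem_filter.1 (mem_of_mem_erase hx)).2 (ne_of_mem_erase hx),
    sum_const, smul_eq_mul, mul_one, card_erase_add_one h1]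

end OrderOf

theorem factorization_rho (G : Type*) [Group G] [Fintype G] (p : ℕ) :
    (rho G).factorization p = ∑ x : G, (orderOf x).factorization p := by
  rw [rho, finprod_eq_prod_of_fintype, Nat.factorization_prod fun x _ => (orderOf_pos x).ne',
    Finsupp.finsetSum_apply]

theorem parity_factorization_rho (G : Type*) [Group G] [Finite G] :
    (∀ p : ℕ, p.Prime → Odd p → p ∣ Nat.card G → Even ((rho G).factorization p)) ∧
    (2 ∣ Nat.card G → Odd ((rho G).factorization 2)) := by
  classical
  cases nonempty_fintype G
  have key (p : ℕ) : ((rho G).factorization p : ZMod 2) =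
      ∑ x : G with x⁻¹ = x, ((orderOf x).factorization p : ZMod 2) := by
    rw [factorization_rho, Nat.cast_sum]
    exact sum_eq_sum_filter_inv_eq_self _ fun x => by rw [orderOf_inv]
  refine ⟨fun p hp hodd _ => ?_, fun h2 => ?_⟩
  · have hp2 : p ≠ 2 := by rintro rfl; exact Nat.not_odd_iff_even.2 even_two hodd
    rw [← ZMod.natCast_eq_zero_iff_even, key]
    exact sum_eq_zero fun x hx => by
      rw [factorization_orderOf_eq_zero_of_inv_eq_self hp hp2 (mem_filter.1 hx).2, Nat.cast_zero]
  · have hcount := congrArg (Nat.cast : ℕ → ZMod 2)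
      (sum_factorization_two_orderOf_filter_inv_eq_self_add_one (G := G))
    rw [Nat.cast_add, Nat.cast_one, card_filter_inv_eq_self_cast G (ZMod 2),
      (ZMod.natCast_eq_zero_iff_even).2 (even_iff_two_dvd.2 h2), add_eq_zero_iff_eq_neg,
      CharTwo.neg_eq] at hcount
    rw [← ZMod.natCast_eq_one_iff_odd, key, ← hcount, Nat.cast_sum]
end
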